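/- arXiv:1209.1511 — 3 statements merged into one kernel-verified Lean document; each statement's English description precedes it below -/
import Mathlib

section
/- If X is a subadditive double-indexed sequence (X_{0,n} ≤ X_{0,m} + X_{m,n} for all m ≤ n) of integrable random variables such that for each k the sequence (X_{nk,(n+1)k})_{n≥0} is i.i.d., each (X_{n,n+k})_{k≥0} has the same distribution as (X_{0,k})_{k≥0}, and sup_n E[|X_{0,n}|]/n < ∞, then X_{0,n}/n converges almost surely and in L^1 to v := inf_n E[X_{0,n}]/n. -/
/-!
Fekete's lemma gives `E X₀ₙ / n → v`.

Upper bound: split `[0, n]` into blocks of length `k`. Subadditivity bounds `X₀ₙ` by a sum of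
i.i.d. block variables plus one incomplete block; the strong law controls the sum and
Borel–Cantelli the incomplete block, so `limsup X₀ₙ / n ≤ E X₀ₖ / k + 2 / k` a.s. for every `k`,
hence `limsup X₀ₙ / n ≤ v`.

Lower bound: the liminf `ℓ` of `X₀ₙ / n`, clipped to `[-M, M]`, can only increase when the origin
moves to `m`, while its law does not change, so `ℓ` is a.s. shift invariant. Covering `[0, N]`
greedily by stretches of length `≤ L` along which `X` grows with slope at most `ℓ + ε`, and paying
for the single steps where no such stretch starts, gives `E X₀N ≤ N (E ℓ + ε + η_L) + O(L)` with
`η_L → 0`. Hence `v ≤ E ℓ`, and since `ℓ ≤ v`, `ℓ = v` a.s.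

L¹: `X₀ₙ / n ≤ Sₙ / n` with `Sₙ = ∑_{i<n} X_{i,i+1}`. The nonnegative gap converges a.s. and in
mean, hence in L¹ (Scheffé), and `Sₙ / n` converges in L¹ by the strong law.
-/

open MeasureTheory ProbabilityTheory Filter Set
open scoped Topology ENNReal

noncomputable section

theorem le_sum_blocks_of_subadditive {x : ℕ → ℕ → ℝ}
    (hsub : ∀ m n, m ≤ n → x 0 n ≤ x 0 m + x m n) (k : ℕ) {q : ℕ} (hq : 1 ≤ q) :
    x 0 (q * k) ≤ ∑ i ∈ Finset.range q, x (i * k) ((i + 1) * k) := by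
  induction q, hq using Nat.le_induction with
  | base => simp
  | succ q hq ih =>
    rw [Finset.sum_range_succ]
    linarith [hsub (q * k) ((q + 1) * k) (Nat.mul_le_mul_right k q.le_succ)]

theorem div_le_average_of_subadditive {x : ℕ → ℕ → ℝ}
    (hsub : ∀ m n, m ≤ n → x 0 n ≤ x 0 m + x m n) (n : ℕ) :
    x 0 n / n ≤ (∑ i ∈ Finset.range n, x i (i + 1)) / n := by
  rcases Nat.eq_zero_or_pos n with rfl | hn
  · simp
  · have := le_sum_blocks_of_subadditive hsub 1 hn
    simp only [mul_one] at this
    gcongr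

theorem le_greedy_cover_of_subadditive {x : ℕ → ℕ → ℝ}
    (hsub : ∀ m n, m ≤ n → x 0 n ≤ x 0 m + x m n) (c : ℝ) (L N : ℕ) :
    x 0 N ≤ x 0 0 + N * c + ∑ m ∈ Finset.range N,
      if (∃ t ∈ Finset.Icc 1 L, x m (m + t) ≤ t * c) ∧ m + L ≤ N then 0
      else max (x m (m + 1) - c) 0 := by
  set b : ℕ → ℝ := fun m =>
    if (∃ t ∈ Finset.Icc 1 L, x m (m + t) ≤ t * c) ∧ m + L ≤ N then 0
    else max (x m (m + 1) - c) 0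
  let Q (n : ℕ) : Prop := x 0 n ≤ x 0 0 + n * c + ∑ m ∈ Finset.range n, b m
  have hb : ∀ m, 0 ≤ b m := fun m => by
    simp only [b]; split_ifs <;> simp
  -- from `n < N`, jump along a descent of length `≤ L` if one fits before `N`, else by one step
  have step : ∀ n < N, Q n → ∃ s, 1 ≤ s ∧ n + s ≤ N ∧ Q (n + s) := by
    intro n hn hQ
    by_cases hgood : (∃ t ∈ Finset.Icc 1 L, x n (n + t) ≤ t * c) ∧ n + L ≤ N
    · obtain ⟨⟨t, ht, hxt⟩, hnL⟩ := hgood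
      rw [Finset.mem_Icc] at ht
      refine ⟨t, ht.1, by omega, ?_⟩
      have := hsub n (n + t) (Nat.le_add_right n t)
      have := Finset.sum_le_sum_of_subset_of_nonneg
        (Finset.range_subset_range.2 (Nat.le_add_right n t)) fun m _ _ => hb m
      simp only [Q, Nat.cast_add]
      nlinarith
    · refine ⟨1, le_rfl, hn, ?_⟩
      have hbn : b n = max (x n (n + 1) - c) 0 := if_neg hgood
      have := hsub n (n + 1) (Nat.le_succ n)
      have := le_max_left (x n (n + 1) - c) 0
      simp only [Q, Finset.sum_range_succ, hbn, Nat.cast_add, Nat.cast_one]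
      linarith
  have reach : ∀ n ≤ N, Q n → Q N := by
    intro n hn hQ
    induction h : N - n using Nat.strong_induction_on generalizing n with
    | _ d ih =>
      rcases hn.eq_or_lt with rfl | hlt
      · exact hQ
      obtain ⟨s, hs, hsN, hQs⟩ := step n hlt hQ
      exact ih _ (by omega) (n + s) hsN hQs rfl
  exact reach 0 (Nat.zero_le N) (by simp [Q])

theorem sum_range_ite_lt_add_le_mul {c : ℝ} (hc : 0 ≤ c) (L N : ℕ) :
    ∑ m ∈ Finset.range N, (if N < m + L then c else 0) ≤ L * c := by
  rw [Finset.sum_ite, Finset.sum_const_zero, add_zero, Finset.sum_const, nsmul_eq_mul]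
  gcongr
  calc ((Finset.range N).filter fun m => N < m + L).card ≤ (Finset.Ico (N - L) N).card :=
        Finset.card_le_card fun m hm => by
          simp only [Finset.mem_filter, Finset.mem_range] at hm
          exact Finset.mem_Ico.2 ⟨by omega, hm.1⟩
    _ ≤ L := by simp only [Nat.card_Ico]; omega

theorem tendsto_comp_div_div_of_tendsto_div {s : ℕ → ℝ} {α : ℝ} {k : ℕ} (hk : k ≠ 0)
    (hs : Tendsto (fun q : ℕ => s q / q) atTop (𝓝 α)) :
    Tendsto (fun n : ℕ => s (n / k) / n) atTop (𝓝 (α / k)) := by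
  have hq : Tendsto (fun n : ℕ => n / k) atTop atTop := Nat.tendsto_div_const_atTop hk
  have hfloor : Tendsto (fun n : ℕ => ((n / k : ℕ) : ℝ) / n) atTop (𝓝 (k : ℝ)⁻¹) := by
    refine ((tendsto_nat_floor_mul_div_atTop (inv_nonneg.2 (Nat.cast_nonneg k))).comp
      tendsto_natCast_atTop_atTop).congr fun n => ?_
    simp [inv_mul_eq_div, Nat.floor_div_eq_div]
  refine ((hs.comp hq).mul hfloor).congr' ?_
  filter_upwards [hq.eventually_ge_atTop 1] with n hn
  have : ((n / k : ℕ) : ℝ) ≠ 0 := by positivity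
  simp only [Function.comp_apply]
  field_simp

theorem Subadditive.tendsto_of_isGLB {u : ℕ → ℝ} (hu : Subadditive u) {v : ℝ}
    (hv : IsGLB ((fun n => u n / n) '' Ici 1) v) :
    Tendsto (fun n => u n / n) atTop (𝓝 v) := by
  have hbdd : BddBelow (range fun n => u n / n) := by
    refine ⟨min v 0, forall_mem_range.2 fun n => ?_⟩
    rcases Nat.eq_zero_or_pos n with rfl | hn
    · simp
    · exact (min_le_left _ _).trans (hv.1 ⟨n, hn, rfl⟩)
  have h := hu.tendsto_lim hbdd
  rwa [Subadditive.lim, hv.csInf_eq ⟨_, 1, mem_Ici.2 le_rfl, rfl⟩] at h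

/-- Clipping each average to `[-M, M]` keeps the liminf real, bounded and measurable. -/
def truncLiminf (M : ℝ) (y : ℕ → ℝ) : ℝ :=
  liminf (fun t : ℕ => max (min (y t / t) M) (-M)) atTop

section truncLiminf

variable {M a b c : ℝ} {y z : ℕ → ℝ}

theorem measurable_truncLiminf (M : ℝ) : Measurable (truncLiminf M) :=
  Measurable.liminf fun t =>
    (((measurable_pi_apply t).div_const _).min measurable_const).max measurable_const

theorem neg_le_truncLiminf (M : ℝ) (y : ℕ → ℝ) : -M ≤ truncLiminf M y :=
  le_liminf_of_le (isCoboundedUnder_ge_of_le atTop fun _ =>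
      max_le_max (min_le_right _ _) le_rfl) (Eventually.of_forall fun _ => le_max_right _ _)

theorem truncLiminf_le (hM : 0 ≤ M) (y : ℕ → ℝ) : truncLiminf M y ≤ M :=
  liminf_le_of_frequently_le
    (Frequently.of_forall fun _ => max_le (min_le_right _ _) (by linarith))
    (isBoundedUnder_of ⟨-M, fun _ => le_max_right _ _⟩)

theorem truncLiminf_le_of_frequently_le (hb : -M ≤ b) (h : ∃ᶠ t : ℕ in atTop, y t / t ≤ b) :
    truncLiminf M y ≤ b :=
  liminf_le_of_frequently_le (h.mono fun _ ht => max_le ((min_le_left _ _).trans ht) hb)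
    (isBoundedUnder_of ⟨-M, fun _ => le_max_right _ _⟩)

theorem frequently_lt_of_truncLiminf_lt (hbM : b ≤ M) (h : truncLiminf M y < b) :
    ∃ᶠ t : ℕ in atTop, y t / t < b :=
  (frequently_lt_of_liminf_lt (isCoboundedUnder_ge_of_le atTop fun _ =>
      max_le_max (min_le_right _ _) le_rfl) h).mono
    fun _ ht => (min_lt_iff.1 ((le_max_left _ _).trans_lt ht)).resolve_right hbM.not_gt

theorem eventually_lt_div_of_lt_truncLiminf (ha : -M ≤ a) (h : a < truncLiminf M y) :
    ∀ᶠ t : ℕ in atTop, a < y t / t :=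
  (eventually_lt_of_lt_liminf h (isBoundedUnder_of ⟨-M, fun _ => le_max_right _ _⟩)).mono
    fun _ ht => (lt_min_iff.1 ((lt_max_iff.1 ht).resolve_right ha.not_gt)).1

theorem truncLiminf_le_of_shift (hM : 0 ≤ M) {m : ℕ} (hyz : ∀ t, y (m + t) ≤ c + z t) :
    truncLiminf M y ≤ truncLiminf M z := by
  refine le_of_forall_pos_le_add fun δ hδ => ?_
  rcases le_or_gt M (truncLiminf M z + δ) with hle | hlt
  · exact (truncLiminf_le hM y).trans hle
  set s := truncLiminf M z + δ / 2 with hs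
  have hz : ∃ᶠ t : ℕ in atTop, z t / t < s :=
    frequently_lt_of_truncLiminf_lt (M := M) (by linarith) (by linarith)
  have hlim : Tendsto (fun t : ℕ => (c + s * t) / (m + 1 * t)) atTop (𝓝 (s / 1)) :=
    tendsto_add_mul_div_add_mul_atTop_nhds c m s one_ne_zero
  have hev : ∀ᶠ t : ℕ in atTop, (c + s * t) / (m + 1 * t) < truncLiminf M z + δ :=
    hlim.eventually (gt_mem_nhds (by rw [div_one]; linarith))
  apply truncLiminf_le_of_frequently_le (by linarith [neg_le_truncLiminf M z])
  refine (tendsto_add_atTop_nat m).frequently ?_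
  refine (hz.and_eventually (hev.and (eventually_gt_atTop 0))).mono fun t ⟨hzt, hct, ht⟩ => ?_
  rw [div_lt_iff₀ (Nat.cast_pos.2 ht)] at hzt
  rw [add_comm t m, Nat.cast_add, one_mul] at *
  refine le_trans ?_ hct.le
  gcongr
  linarith [hyz t]

end truncLiminf

/-- The price paid by the greedy cover of `le_greedy_cover_of_subadditive` for a single step from
a point where no descent of length at most `L` starts. -/
def descentPenalty (M ε : ℝ) (L : ℕ) (y : ℕ → ℝ) : ℝ :=
  if ∃ t ∈ Finset.Icc 1 L, y t ≤ t * (truncLiminf M y + ε) then 0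
  else max (y 1 - (truncLiminf M y + ε)) 0

section descentPenalty

variable {M ε : ℝ} {L : ℕ} {y : ℕ → ℝ}

theorem measurable_descentPenalty (M ε : ℝ) (L : ℕ) : Measurable (descentPenalty M ε L) := by
  refine Measurable.ite ?_ measurable_const
    (((measurable_pi_apply 1).sub ((measurable_truncLiminf M).add_const ε)).max measurable_const)
  have : {y : ℕ → ℝ | ∃ t ∈ Finset.Icc 1 L, y t ≤ t * (truncLiminf M y + ε)}
      = ⋃ t ∈ Finset.Icc 1 L, {y | y t ≤ t * (truncLiminf M y + ε)} := by ext; simp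
  rw [this]
  exact Finset.measurableSet_biUnion _ fun t _ =>
    measurableSet_le (measurable_pi_apply t) (((measurable_truncLiminf M).add_const ε).const_mul _)

theorem descentPenalty_nonneg : 0 ≤ descentPenalty M ε L y := by
  unfold descentPenalty; split_ifs <;> simp

theorem descentPenalty_le (hM : 0 ≤ M) (hε : 0 ≤ ε) : descentPenalty M ε L y ≤ |y 1| + M := by
  have := neg_le_truncLiminf M y
  have := le_abs_self (y 1)
  unfold descentPenalty; split_ifs
  · positivity
  · exact max_le (by linarith) (by positivity)

theorem eventually_descentPenalty_eq_zero (hε : 0 < ε) (hM : truncLiminf M y + ε ≤ M) :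
    ∀ᶠ L in atTop, descentPenalty M ε L y = 0 := by
  have hfreq := frequently_lt_of_truncLiminf_lt hM (lt_add_of_pos_right _ hε)
  obtain ⟨t, ht, hlt⟩ := (hfreq.and_eventually (eventually_ge_atTop 1)).exists
  filter_upwards [eventually_ge_atTop t] with L hL
  refine if_pos ⟨t, Finset.mem_Icc.2 ⟨hlt, hL⟩, ?_⟩
  rw [div_lt_iff₀ (by exact_mod_cast hlt)] at ht
  linarith

end descentPenalty

section Probability

variable {Ω : Type*} [MeasurableSpace Ω] {μ : Measure Ω}

theorem ProbabilityTheory.IdentDistrib.ae_eq_of_ae_le {f g : Ω → ℝ}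
    (hfg : IdentDistrib f g μ μ) (hg : Integrable g μ) (hle : f ≤ᵐ[μ] g) : f =ᵐ[μ] g :=
  (integral_eq_iff_of_ae_le (hfg.integrable_iff.2 hg) hg hle).1 hfg.integral_eq

theorem ae_eventually_le_of_identDistrib [IsProbabilityMeasure μ] {Z : ℕ → Ω → ℝ} {W : Ω → ℝ}
    (hW : Integrable W μ) (hZ : ∀ q, IdentDistrib (Z q) W μ μ) :
    ∀ᵐ ω ∂μ, ∀ᶠ q : ℕ in atTop, Z q ω ≤ q := by
  let _ : MeasureSpace Ω := ⟨μ⟩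
  have hsum : ∑' q : ℕ, μ {ω | Z q ω ∈ Ioi (q : ℝ)} ≠ ∞ := by
    refine ne_top_of_le_ne_top (tsum_prob_mem_Ioi_lt_top hW.abs fun _ => abs_nonneg _).ne
      (ENNReal.tsum_le_tsum fun q => ?_)
    change μ (Z q ⁻¹' Ioi (q : ℝ)) ≤ μ {ω | |W ω| ∈ Ioi (q : ℝ)}
    rw [(hZ q).measure_mem_eq measurableSet_Ioi]
    exact measure_mono fun ω (h : (q : ℝ) < W ω) => h.trans_le (le_abs_self _)
  filter_upwards [ae_eventually_notMem hsum] with ω hω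
  exact hω.mono fun q hq => not_lt.1 hq

/-- Scheffé's lemma. -/
theorem tendsto_integral_abs_sub_of_nonneg {g : ℕ → Ω → ℝ} {G : Ω → ℝ}
    (hg : ∀ n, Integrable (g n) μ) (hG : Integrable G μ) (hnn : ∀ n, 0 ≤ᵐ[μ] g n)
    (hae : ∀ᵐ ω ∂μ, Tendsto (fun n => g n ω) atTop (𝓝 (G ω)))
    (hint : Tendsto (fun n => ∫ ω, g n ω ∂μ) atTop (𝓝 (∫ ω, G ω ∂μ))) :
    Tendsto (fun n => ∫ ω, |g n ω - G ω| ∂μ) atTop (𝓝 0) := by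
  have hGnn : 0 ≤ᵐ[μ] G := by
    filter_upwards [ae_all_iff.2 hnn, hae] with ω h1 h2
    exact ge_of_tendsto' h2 h1
  have hmin : Tendsto (fun n => ∫ ω, min (g n ω) (G ω) ∂μ) atTop (𝓝 (∫ ω, G ω ∂μ)) := by
    refine tendsto_integral_of_dominated_convergence (fun ω => |G ω|)
      (fun n => ((hg n).inf hG).1) hG.abs (fun n => ?_) ?_
    · filter_upwards [hnn n, hGnn] with ω h1 h2
      rw [Real.norm_eq_abs, abs_of_nonneg (le_min h1 h2)]
      exact (min_le_right _ _).trans (le_abs_self _)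
    · filter_upwards [hae] with ω h
      simpa using h.min (tendsto_const_nhds (x := G ω))
  have key : ∀ n, ∫ ω, |g n ω - G ω| ∂μ
      = ∫ ω, g n ω ∂μ + ∫ ω, G ω ∂μ - 2 * ∫ ω, min (g n ω) (G ω) ∂μ := by
    intro n
    have habs : ∀ a b : ℝ, |a - b| = a + b - 2 * min a b := fun a b => by
      rcases le_total a b with h | h
      · rw [min_eq_left h, abs_of_nonpos (by linarith)]; ring
      · rw [min_eq_right h, abs_of_nonneg (by linarith)]; ring
    have hsum : Integrable (fun ω => g n ω + G ω) μ := (hg n).add hG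
    have hmin : Integrable (fun ω => 2 * min (g n ω) (G ω)) μ := ((hg n).inf hG).const_mul 2
    simp_rw [habs]
    rw [integral_sub hsum hmin, integral_add (hg n) hG, integral_const_mul]
  simp_rw [key]
  convert (hint.add (tendsto_const_nhds (x := ∫ ω, G ω ∂μ))).sub (hmin.const_mul 2) using 2
  ring

theorem ae_tendsto_average_of_iIndepFun [IsProbabilityMeasure μ] {Y : ℕ → Ω → ℝ} {W : Ω → ℝ}
    (hW : Integrable W μ) (hindep : iIndepFun Y μ) (hident : ∀ i, IdentDistrib (Y i) W μ μ) :
    ∀ᵐ ω ∂μ, Tendsto (fun n : ℕ => (∑ i ∈ Finset.range n, Y i ω) / n) atTop (𝓝 (μ[W])) := by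
  have h := strong_law_ae_real Y ((hident 0).integrable_iff.2 hW)
    (fun i j hij => hindep.indepFun hij) fun i => (hident i).trans (hident 0).symm
  rwa [(hident 0).integral_eq] at h

theorem tendsto_integral_abs_average_sub_of_iIndepFun [IsProbabilityMeasure μ]
    {Y : ℕ → Ω → ℝ} {W : Ω → ℝ} (hW : Integrable W μ) (hindep : iIndepFun Y μ)
    (hident : ∀ i, IdentDistrib (Y i) W μ μ) :
    Tendsto (fun n : ℕ => ∫ ω, |(∑ i ∈ Finset.range n, Y i ω) / n - μ[W]| ∂μ) atTop (𝓝 0) := by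
  have hY : ∀ i, Integrable (Y i) μ := fun i => (hident i).integrable_iff.2 hW
  have h := (ENNReal.tendsto_toReal ENNReal.zero_ne_top).comp
    (strong_law_Lp le_rfl ENNReal.one_ne_top Y (memLp_one_iff_integrable.2 (hY 0))
      (fun i j hij => hindep.indepFun hij) fun i => (hident i).trans (hident 0).symm)
  rw [(hident 0).integral_eq] at h
  refine h.congr fun n => ?_
  have hmeas : AEStronglyMeasurable (fun ω => (∑ i ∈ Finset.range n, Y i ω) / n - μ[W]) μ :=
    (((integrable_finsetSum _ fun i _ => hY i).div_const _).sub
      (integrable_const _)).aestronglyMeasurable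
  simp only [Function.comp_apply, eLpNorm_one_eq_lintegral_enorm, smul_eq_mul, inv_mul_eq_div,
    ← integral_norm_eq_lintegral_enorm hmeas, Real.norm_eq_abs]

variable [IsFiniteMeasure μ] {M ε : ℝ} {F : Ω → ℕ → ℝ}

theorem integrable_truncLiminf_comp (hM : 0 ≤ M) (hF : AEMeasurable F μ) :
    Integrable (fun ω => truncLiminf M (F ω)) μ :=
  Integrable.of_bound ((measurable_truncLiminf M).comp_aemeasurable hF).aestronglyMeasurable M
    (ae_of_all _ fun _ => abs_le.2 ⟨neg_le_truncLiminf M _, truncLiminf_le hM _⟩)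

theorem integrable_descentPenalty_comp (hM : 0 ≤ M) (hε : 0 ≤ ε) (L : ℕ)
    (hF : AEMeasurable F μ) (hF1 : Integrable (fun ω => F ω 1) μ) :
    Integrable (fun ω => descentPenalty M ε L (F ω)) μ :=
  Integrable.mono' (hF1.abs.add (integrable_const M))
    ((measurable_descentPenalty M ε L).comp_aemeasurable hF).aestronglyMeasurable
    (ae_of_all _ fun _ => by
      rw [Real.norm_eq_abs, abs_of_nonneg descentPenalty_nonneg]
      exact descentPenalty_le hM hε)

theorem tendsto_integral_descentPenalty (hM : 0 ≤ M) (hε : 0 < ε) (hF : AEMeasurable F μ)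
    (hF1 : Integrable (fun ω => F ω 1) μ) (hlt : ∀ᵐ ω ∂μ, truncLiminf M (F ω) + ε ≤ M) :
    Tendsto (fun L => ∫ ω, descentPenalty M ε L (F ω) ∂μ) atTop (𝓝 0) := by
  have h := tendsto_integral_of_dominated_convergence (fun ω => |F ω 1| + M)
    (fun L => (integrable_descentPenalty_comp hM hε.le L hF hF1).1)
    (hF1.abs.add (integrable_const M))
    (fun L => ae_of_all _ fun ω => by
      rw [Real.norm_eq_abs, abs_of_nonneg descentPenalty_nonneg]
      exact descentPenalty_le hM hε.le)
    (by
      filter_upwards [hlt] with ω h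
      exact tendsto_const_nhds.congr' (EventuallyEq.symm (eventually_descentPenalty_eq_zero hε h)))
  simpa using h

end Probability

namespace Liggett

variable {Ω : Type*} [MeasurableSpace Ω] {μ : Measure Ω} {X : ℕ → ℕ → Ω → ℝ}

theorem identDistrib_comp_shift (hint : ∀ m n, Integrable (X m n) μ)
    (hstat : ∀ n : ℕ, μ.map (fun ω => fun k : ℕ => X n (n + k) ω)
        = μ.map (fun ω => fun k : ℕ => X 0 k ω))
    (m : ℕ) {E : Type*} [MeasurableSpace E] {φ : (ℕ → ℝ) → E} (hφ : Measurable φ) :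
    IdentDistrib (fun ω => φ fun k => X m (m + k) ω) (fun ω => φ fun k => X 0 k ω) μ μ :=
  IdentDistrib.comp ⟨aemeasurable_pi_lambda _ fun k => (hint m (m + k)).aemeasurable,
    aemeasurable_pi_lambda _ fun k => (hint 0 k).aemeasurable, hstat m⟩ hφ

theorem identDistrib_shift (hint : ∀ m n, Integrable (X m n) μ)
    (hstat : ∀ n : ℕ, μ.map (fun ω => fun k : ℕ => X n (n + k) ω)
        = μ.map (fun ω => fun k : ℕ => X 0 k ω))
    (m k : ℕ) : IdentDistrib (X m (m + k)) (X 0 k) μ μ :=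
  identDistrib_comp_shift hint hstat m (measurable_pi_apply k)

theorem subadditive_integral (hint : ∀ m n, Integrable (X m n) μ)
    (hsub : ∀ m n : ℕ, m ≤ n → ∀ ω, X 0 n ω ≤ X 0 m ω + X m n ω)
    (hstat : ∀ n : ℕ, μ.map (fun ω => fun k : ℕ => X n (n + k) ω)
        = μ.map (fun ω => fun k : ℕ => X 0 k ω)) :
    Subadditive fun n => ∫ ω, X 0 n ω ∂μ := fun m n =>
  calc ∫ ω, X 0 (m + n) ω ∂μ ≤ ∫ ω, X 0 m ω + X m (m + n) ω ∂μ :=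
        integral_mono (hint _ _) ((hint _ _).add (hint _ _))
          (hsub m (m + n) (Nat.le_add_right m n))
    _ = ∫ ω, X 0 m ω ∂μ + ∫ ω, X 0 n ω ∂μ := by
        rw [integral_add (hint _ _) (hint _ _), (identDistrib_shift hint hstat m n).integral_eq]

theorem ae_eventually_div_le_of_blocks [IsProbabilityMeasure μ]
    (hint : ∀ m n, Integrable (X m n) μ)
    (hsub : ∀ m n : ℕ, m ≤ n → ∀ ω, X 0 n ω ≤ X 0 m ω + X m n ω)
    (hstat : ∀ n : ℕ, μ.map (fun ω => fun k : ℕ => X n (n + k) ω)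
        = μ.map (fun ω => fun k : ℕ => X 0 k ω))
    {k : ℕ} (hk : 1 ≤ k) (hindep : iIndepFun (fun (n : ℕ) ω => X (n * k) ((n + 1) * k) ω) μ)
    (hident : ∀ n : ℕ,
        IdentDistrib (fun ω => X (n * k) ((n + 1) * k) ω) (fun ω => X 0 k ω) μ μ) :
    ∀ᵐ ω ∂μ, ∀ᶠ n : ℕ in atTop, X 0 n ω / n ≤ (∫ ω, X 0 k ω ∂μ) / k + 2 / k := by
  have hk0 : k ≠ 0 := by omega
  have hq : Tendsto (fun n : ℕ => n / k) atTop atTop := Nat.tendsto_div_const_atTop hk0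
  -- Borel–Cantelli: the incomplete last block `X (q k) (q k + r)`, `r < k`, is eventually `≤ q`
  have hrem : ∀ᵐ ω ∂μ, ∀ r, ∀ᶠ q : ℕ in atTop, X (q * k) (q * k + r) ω ≤ q :=
    ae_all_iff.2 fun r =>
      ae_eventually_le_of_identDistrib (hint 0 r) fun q => identDistrib_shift hint hstat _ r
  filter_upwards [ae_tendsto_average_of_iIndepFun (hint 0 k) hindep hident, hrem]
    with ω hS hR
  have hSn := tendsto_comp_div_div_of_tendsto_div hk0 hS
  have hR' : ∀ᶠ n : ℕ in atTop, X (n / k * k) n ω ≤ (n / k : ℕ) := by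
    filter_upwards [hq.eventually ((Finset.range k).eventually_all.2 fun r _ => hR r)] with n hn
    simpa [Nat.div_add_mod'] using hn (n % k) (Finset.mem_range.2 (Nat.mod_lt n hk))
  have hlt : (∫ ω, X 0 k ω ∂μ) / k < (∫ ω, X 0 k ω ∂μ) / k + 1 / k :=
    lt_add_of_pos_right _ (by positivity)
  filter_upwards [hSn.eventually (gt_mem_nhds hlt), hR', hq.eventually_ge_atTop 1,
    eventually_gt_atTop 0] with n hSum hLast hqn hn
  have hn' : ((n / k : ℕ) : ℝ) / n ≤ 1 / k := by
    rw [div_le_div_iff₀ (Nat.cast_pos.2 hn) (by positivity), one_mul]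
    exact_mod_cast Nat.div_mul_le_self n k
  calc X 0 n ω / n ≤ (X 0 (n / k * k) ω + X (n / k * k) n ω) / n := by
        gcongr; exact hsub _ _ (Nat.div_mul_le_self n k) ω
    _ ≤ (∑ i ∈ Finset.range (n / k), X (i * k) ((i + 1) * k) ω) / n + ((n / k : ℕ) : ℝ) / n := by
        rw [add_div]
        gcongr
        exact le_sum_blocks_of_subadditive (x := fun m n => X m n ω)
          (fun m n h => hsub m n h ω) k hqn
    _ ≤ (∫ ω, X 0 k ω ∂μ) / k + 2 / k := by
        linarith [show (2 : ℝ) / k = 1 / k + 1 / k by ring]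

theorem ae_eventually_div_lt [IsProbabilityMeasure μ]
    (hint : ∀ m n, Integrable (X m n) μ)
    (hsub : ∀ m n : ℕ, m ≤ n → ∀ ω, X 0 n ω ≤ X 0 m ω + X m n ω)
    (hstat : ∀ n : ℕ, μ.map (fun ω => fun k : ℕ => X n (n + k) ω)
        = μ.map (fun ω => fun k : ℕ => X 0 k ω))
    (hindep : ∀ k : ℕ, 1 ≤ k →
        iIndepFun (fun (n : ℕ) ω => X (n * k) ((n + 1) * k) ω) μ)
    (hident : ∀ k n : ℕ, 1 ≤ k →
        IdentDistrib (fun ω => X (n * k) ((n + 1) * k) ω) (fun ω => X 0 k ω) μ μ)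
    {v : ℝ} (hv : Tendsto (fun n : ℕ => (∫ ω, X 0 n ω ∂μ) / n) atTop (𝓝 v)) :
    ∀ᵐ ω ∂μ, ∀ b, v < b → ∀ᶠ n : ℕ in atTop, X 0 n ω / n < b := by
  have hblocks : ∀ᵐ ω ∂μ, ∀ k : ℕ, 1 ≤ k →
      ∀ᶠ n : ℕ in atTop, X 0 n ω / n ≤ (∫ ω, X 0 k ω ∂μ) / k + 2 / k := by
    refine ae_all_iff.2 fun k => ?_
    by_cases hk : 1 ≤ k
    · filter_upwards [ae_eventually_div_le_of_blocks hint hsub hstat hk (hindep k hk)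
        fun n => hident k n hk] with ω h using fun _ => h
    · exact ae_of_all _ fun _ hk' => absurd hk' hk
  have hlim : Tendsto (fun k : ℕ => (∫ ω, X 0 k ω ∂μ) / k + 2 / k) atTop (𝓝 v) := by
    simpa using hv.add (tendsto_const_div_atTop_nhds_zero_nat 2)
  filter_upwards [hblocks] with ω hω b hb
  obtain ⟨k, hkb, hk⟩ := ((hlim.eventually (gt_mem_nhds hb)).and (eventually_ge_atTop 1)).exists
  exact (hω k hk).mono fun n hn => hn.trans_lt hkb

theorem ae_truncLiminf_shift_eq [IsFiniteMeasure μ] (hint : ∀ m n, Integrable (X m n) μ)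
    (hsub : ∀ m n : ℕ, m ≤ n → ∀ ω, X 0 n ω ≤ X 0 m ω + X m n ω)
    (hstat : ∀ n : ℕ, μ.map (fun ω => fun k : ℕ => X n (n + k) ω)
        = μ.map (fun ω => fun k : ℕ => X 0 k ω)) {M : ℝ} (hM : 0 ≤ M) :
    ∀ᵐ ω ∂μ, ∀ m, truncLiminf M (fun k => X m (m + k) ω) = truncLiminf M (fun k => X 0 k ω) := by
  refine ae_all_iff.2 fun m => ?_
  have hle : ∀ ω, truncLiminf M (fun k => X 0 k ω) ≤ truncLiminf M (fun k => X m (m + k) ω) :=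
    fun ω => truncLiminf_le_of_shift hM fun t => hsub m (m + t) (Nat.le_add_right m t) ω
  have hid := (identDistrib_comp_shift hint hstat m (measurable_truncLiminf M)).symm
  filter_upwards [hid.ae_eq_of_ae_le (integrable_truncLiminf_comp hM
    (aemeasurable_pi_lambda _ fun k => (hint m (m + k)).aemeasurable)) (ae_of_all _ hle)]
    with ω h using h.symm

theorem ae_le_greedy_cover [IsFiniteMeasure μ] (hint : ∀ m n, Integrable (X m n) μ)
    (hsub : ∀ m n : ℕ, m ≤ n → ∀ ω, X 0 n ω ≤ X 0 m ω + X m n ω)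
    (hstat : ∀ n : ℕ, μ.map (fun ω => fun k : ℕ => X n (n + k) ω)
        = μ.map (fun ω => fun k : ℕ => X 0 k ω))
    {M ε : ℝ} (hM : 0 ≤ M) (hε : 0 ≤ ε) (L N : ℕ) :
    ∀ᵐ ω ∂μ, X 0 N ω ≤ X 0 0 ω + N * (truncLiminf M (fun k => X 0 k ω) + ε)
      + ∑ m ∈ Finset.range N, (descentPenalty M ε L (fun k => X m (m + k) ω)
        + if N < m + L then |X m (m + 1) ω| + M else 0) := by
  filter_upwards [ae_truncLiminf_shift_eq hint hsub hstat hM] with ω hω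
  set ℓ := truncLiminf M (fun k => X 0 k ω)
  refine (le_greedy_cover_of_subadditive (x := fun m n => X m n ω)
    (fun m n h => hsub m n h ω) (ℓ + ε) L N).trans ?_
  rw [mul_comm (N : ℝ)]
  gcongr with m
  -- shift invariance of the truncated liminf turns the cover's penalties into `descentPenalty`
  have hPm : descentPenalty M ε L (fun k => X m (m + k) ω) =
      if ∃ t ∈ Finset.Icc 1 L, X m (m + t) ω ≤ t * (ℓ + ε) then 0
      else max (X m (m + 1) ω - (ℓ + ε)) 0 := by
    simp only [descentPenalty, hω m, ℓ]
  by_cases h : N < m + L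
  · have hmL : ¬m + L ≤ N := by omega
    have : -M ≤ ℓ := neg_le_truncLiminf M _
    have : 0 ≤ descentPenalty M ε L (fun k => X m (m + k) ω) := descentPenalty_nonneg
    simp only [if_pos h, hmL, and_false, if_false]
    exact max_le (by linarith [le_abs_self (X m (m + 1) ω)]) (by positivity)
  · simp only [if_neg h, add_zero, hPm, not_lt.1 h, and_true, le_refl]

theorem integral_le_of_greedy_cover [IsProbabilityMeasure μ]
    (hint : ∀ m n, Integrable (X m n) μ)
    (hsub : ∀ m n : ℕ, m ≤ n → ∀ ω, X 0 n ω ≤ X 0 m ω + X m n ω)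
    (hstat : ∀ n : ℕ, μ.map (fun ω => fun k : ℕ => X n (n + k) ω)
        = μ.map (fun ω => fun k : ℕ => X 0 k ω))
    {M ε : ℝ} (hM : 0 ≤ M) (hε : 0 ≤ ε) (L N : ℕ) :
    ∫ ω, X 0 N ω ∂μ ≤ ∫ ω, X 0 0 ω ∂μ + N * (∫ ω, truncLiminf M (fun k => X 0 k ω) ∂μ + ε)
      + N * ∫ ω, descentPenalty M ε L (fun k => X 0 k ω) ∂μ + L * (∫ ω, |X 0 1 ω| ∂μ + M) := by
  set ℓ : Ω → ℝ := fun ω => truncLiminf M (fun k => X 0 k ω)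
  set P : ℕ → Ω → ℝ := fun m ω => descentPenalty M ε L (fun k => X m (m + k) ω)
  set T : ℕ → Ω → ℝ := fun m ω => if N < m + L then |X m (m + 1) ω| + M else 0
  set c := ∫ ω, |X 0 1 ω| ∂μ + M
  have hℓ : Integrable ℓ μ :=
    integrable_truncLiminf_comp hM (aemeasurable_pi_lambda _ fun k => (hint 0 k).aemeasurable)
  have hℓε : Integrable (fun ω => ℓ ω + ε) μ := hℓ.add (integrable_const ε)
  have hP : ∀ m, Integrable (P m) μ := fun m => integrable_descentPenalty_comp hM hε L
    (aemeasurable_pi_lambda _ fun k => (hint m (m + k)).aemeasurable) (hint m (m + 1))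
  have hT : ∀ m, Integrable (T m) μ ∧ ∫ ω, T m ω ∂μ = if N < m + L then c else 0 := by
    intro m
    by_cases h : N < m + L
    · have h1 : ∫ ω, |X m (m + 1) ω| ∂μ = ∫ ω, |X 0 1 ω| ∂μ :=
        ((identDistrib_shift hint hstat m 1).comp measurable_abs).integral_eq
      simp only [T, if_pos h]
      exact ⟨(hint m (m + 1)).abs.add (integrable_const M),
        by simp [integral_add (hint m (m + 1)).abs (integrable_const M), h1, c]⟩
    · simp [T, if_neg h]
  have hPT : ∀ m, Integrable (fun ω => P m ω + T m ω) μ ∧ ∫ ω, P m ω + T m ω ∂μ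
      = ∫ ω, descentPenalty M ε L (fun k => X 0 k ω) ∂μ + if N < m + L then c else 0 := fun m =>
    ⟨(hP m).add (hT m).1, by rw [integral_add (hP m) (hT m).1, (hT m).2,
      (identDistrib_comp_shift hint hstat m (measurable_descentPenalty M ε L)).integral_eq]⟩
  have hA : Integrable (fun ω => X 0 0 ω + N * (ℓ ω + ε)) μ := (hint 0 0).add (hℓε.const_mul _)
  have hB : Integrable (fun ω => ∑ m ∈ Finset.range N, (P m ω + T m ω)) μ :=
    integrable_finsetSum _ fun m _ => (hPT m).1
  have hc : 0 ≤ c := add_nonneg (integral_nonneg fun _ => abs_nonneg _) hM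
  calc ∫ ω, X 0 N ω ∂μ
      ≤ ∫ ω, X 0 0 ω + N * (ℓ ω + ε) + ∑ m ∈ Finset.range N, (P m ω + T m ω) ∂μ :=
        integral_mono_ae (hint 0 N) (hA.add hB) (ae_le_greedy_cover hint hsub hstat hM hε L N)
    _ = ∫ ω, X 0 0 ω ∂μ + N * (∫ ω, ℓ ω ∂μ + ε) + ∑ m ∈ Finset.range N,
          (∫ ω, descentPenalty M ε L (fun k => X 0 k ω) ∂μ + if N < m + L then c else 0) := by
        rw [integral_add hA hB, integral_add (hint 0 0) (hℓε.const_mul _), integral_const_mul,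
          integral_add hℓ (integrable_const ε),
          integral_finsetSum (f := fun m ω => P m ω + T m ω) _ fun m _ => (hPT m).1]
        simp [hPT]
    _ ≤ _ := by
        rw [Finset.sum_add_distrib, Finset.sum_const, Finset.card_range, nsmul_eq_mul]
        linarith [sum_range_ite_lt_add_le_mul hc L N]

theorem le_integral_truncLiminf_add [IsProbabilityMeasure μ]
    (hint : ∀ m n, Integrable (X m n) μ)
    (hsub : ∀ m n : ℕ, m ≤ n → ∀ ω, X 0 n ω ≤ X 0 m ω + X m n ω)
    (hstat : ∀ n : ℕ, μ.map (fun ω => fun k : ℕ => X n (n + k) ω)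
        = μ.map (fun ω => fun k : ℕ => X 0 k ω))
    {v : ℝ} (hv : Tendsto (fun n : ℕ => (∫ ω, X 0 n ω ∂μ) / n) atTop (𝓝 v))
    {M ε : ℝ} (hM : 0 ≤ M) (hε : 0 < ε)
    (hlt : ∀ᵐ ω ∂μ, truncLiminf M (fun k => X 0 k ω) + ε ≤ M) :
    v ≤ ∫ ω, truncLiminf M (fun k => X 0 k ω) ∂μ + ε := by
  set B := ∫ ω, truncLiminf M (fun k => X 0 k ω) ∂μ + ε
  set η : ℕ → ℝ := fun L => ∫ ω, descentPenalty M ε L (fun k => X 0 k ω) ∂μ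
  have hL : ∀ L : ℕ, v ≤ B + η L := by
    intro L
    set C := ∫ ω, X 0 0 ω ∂μ + L * (∫ ω, |X 0 1 ω| ∂μ + M)
    have hlim : Tendsto (fun N : ℕ => C / N + (B + η L)) atTop (𝓝 (B + η L)) := by
      simpa using (tendsto_const_div_atTop_nhds_zero_nat C).add tendsto_const_nhds
    refine le_of_tendsto_of_tendsto hv hlim ?_
    filter_upwards [eventually_gt_atTop 0] with N hN
    have hNR : (0 : ℝ) < N := Nat.cast_pos.2 hN
    rw [div_add' _ _ _ hNR.ne', div_le_div_iff_of_pos_right hNR]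
    linarith [integral_le_of_greedy_cover hint hsub hstat hM hε.le L N]
  have hη := tendsto_integral_descentPenalty hM hε
    (aemeasurable_pi_lambda _ fun k => (hint 0 k).aemeasurable) (hint 0 1) hlt
  exact ge_of_tendsto (by simpa using (tendsto_const_nhds (x := B)).add hη)
    (Eventually.of_forall hL)

theorem ae_truncLiminf_eq [IsProbabilityMeasure μ]
    (hint : ∀ m n, Integrable (X m n) μ)
    (hsub : ∀ m n : ℕ, m ≤ n → ∀ ω, X 0 n ω ≤ X 0 m ω + X m n ω)
    (hstat : ∀ n : ℕ, μ.map (fun ω => fun k : ℕ => X n (n + k) ω)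
        = μ.map (fun ω => fun k : ℕ => X 0 k ω))
    {v : ℝ} (hv : Tendsto (fun n : ℕ => (∫ ω, X 0 n ω ∂μ) / n) atTop (𝓝 v))
    (hup : ∀ᵐ ω ∂μ, ∀ b, v < b → ∀ᶠ n : ℕ in atTop, X 0 n ω / n < b) :
    ∀ᵐ ω ∂μ, truncLiminf (|v| + 1) (fun k => X 0 k ω) = v := by
  set M := |v| + 1
  have hM : 0 ≤ M := by positivity
  have hvM : -M < v ∧ v < M := abs_lt.1 (lt_add_one |v|)
  have hℓ : Integrable (fun ω => truncLiminf M (fun k => X 0 k ω)) μ :=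
    integrable_truncLiminf_comp hM (aemeasurable_pi_lambda _ fun k => (hint 0 k).aemeasurable)
  have hle : ∀ᵐ ω ∂μ, truncLiminf M (fun k => X 0 k ω) ≤ v := by
    filter_upwards [hup] with ω hω
    exact le_of_forall_gt_imp_ge_of_dense fun b hb => truncLiminf_le_of_frequently_le
      (by linarith) ((hω b hb).mono fun _ hn => hn.le).frequently
  have hge : v ≤ ∫ ω, truncLiminf M (fun k => X 0 k ω) ∂μ := by
    refine le_of_forall_pos_le_add fun ε hε => ?_
    have hlt : ∀ᵐ ω ∂μ, truncLiminf M (fun k => X 0 k ω) + min ε 1 ≤ M := by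
      filter_upwards [hle] with ω h
      linarith [min_le_right ε 1, le_abs_self v]
    exact (le_integral_truncLiminf_add hint hsub hstat hv hM (lt_min hε one_pos) hlt).trans
      (by gcongr; exact min_le_left _ _)
  have hint_le : ∫ ω, truncLiminf M (fun k => X 0 k ω) ∂μ ≤ ∫ _, v ∂μ :=
    integral_mono_ae hℓ (integrable_const v) hle
  exact (integral_eq_iff_of_ae_le hℓ (integrable_const v) hle).1
    (le_antisymm hint_le (by simpa using hge))

theorem ae_tendsto_div [IsProbabilityMeasure μ]
    (hint : ∀ m n, Integrable (X m n) μ)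
    (hsub : ∀ m n : ℕ, m ≤ n → ∀ ω, X 0 n ω ≤ X 0 m ω + X m n ω)
    (hstat : ∀ n : ℕ, μ.map (fun ω => fun k : ℕ => X n (n + k) ω)
        = μ.map (fun ω => fun k : ℕ => X 0 k ω))
    (hindep : ∀ k : ℕ, 1 ≤ k →
        iIndepFun (fun (n : ℕ) ω => X (n * k) ((n + 1) * k) ω) μ)
    (hident : ∀ k n : ℕ, 1 ≤ k →
        IdentDistrib (fun ω => X (n * k) ((n + 1) * k) ω) (fun ω => X 0 k ω) μ μ)
    {v : ℝ} (hv : Tendsto (fun n : ℕ => (∫ ω, X 0 n ω ∂μ) / n) atTop (𝓝 v)) :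
    ∀ᵐ ω ∂μ, Tendsto (fun n : ℕ => X 0 n ω / n) atTop (𝓝 v) := by
  have hup := ae_eventually_div_lt hint hsub hstat hindep hident hv
  filter_upwards [hup, ae_truncLiminf_eq hint hsub hstat hv hup] with ω hω hℓ
  refine tendsto_order.2 ⟨fun a ha => ?_, hω⟩
  have hlt : max a (-(|v| + 1)) < truncLiminf (|v| + 1) (fun k => X 0 k ω) := by
    rw [hℓ]; exact max_lt ha (abs_lt.1 (lt_add_one |v|)).1
  exact (eventually_lt_div_of_lt_truncLiminf (le_max_right _ _) hlt).mono
    fun _ hn => (le_max_left _ _).trans_lt hn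

theorem tendsto_integral_abs_div_sub [IsProbabilityMeasure μ]
    (hint : ∀ m n, Integrable (X m n) μ)
    (hsub : ∀ m n : ℕ, m ≤ n → ∀ ω, X 0 n ω ≤ X 0 m ω + X m n ω)
    (hindep : iIndepFun (fun (i : ℕ) ω => X i (i + 1) ω) μ)
    (hident : ∀ i : ℕ, IdentDistrib (fun ω => X i (i + 1) ω) (fun ω => X 0 1 ω) μ μ)
    {v : ℝ} (hv : Tendsto (fun n : ℕ => (∫ ω, X 0 n ω ∂μ) / n) atTop (𝓝 v))
    (hae : ∀ᵐ ω ∂μ, Tendsto (fun n : ℕ => X 0 n ω / n) atTop (𝓝 v)) :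
    Tendsto (fun n : ℕ => ∫ ω, |X 0 n ω / n - v| ∂μ) atTop (𝓝 0) := by
  set S : ℕ → Ω → ℝ := fun n ω => (∑ i ∈ Finset.range n, X i (i + 1) ω) / n
  set a₁ := ∫ ω, X 0 1 ω ∂μ
  have hS : ∀ n, Integrable (S n) μ := fun n =>
    (integrable_finsetSum _ fun i _ => hint i (i + 1)).div_const _
  have hgap : ∀ n, Integrable (fun ω => S n ω - X 0 n ω / n) μ := fun n =>
    (hS n).sub ((hint 0 n).div_const _)
  have hmean : ∀ n, 1 ≤ n → ∫ ω, S n ω - X 0 n ω / n ∂μ = a₁ - (∫ ω, X 0 n ω ∂μ) / n := by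
    intro n hn
    have : (n : ℝ) ≠ 0 := by positivity
    rw [integral_sub (hS n) ((hint 0 n).div_const _), integral_div, integral_div,
      integral_finsetSum _ fun i _ => hint i (i + 1)]
    simp only [fun i => (hident i).integral_eq, Finset.sum_const, Finset.card_range, nsmul_eq_mul]
    field_simp
    rfl
  have hgapL1 : Tendsto (fun n => ∫ ω, |(S n ω - X 0 n ω / n) - (a₁ - v)| ∂μ) atTop (𝓝 0) := by
    refine tendsto_integral_abs_sub_of_nonneg hgap (integrable_const _)
      (fun n => ae_of_all _ fun ω => sub_nonneg.2 (div_le_average_of_subadditive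
        (x := fun m n => X m n ω) (fun m n h => hsub m n h ω) n)) ?_ ?_
    · filter_upwards [ae_tendsto_average_of_iIndepFun (hint 0 1) hindep hident, hae]
        with ω h1 h2 using h1.sub h2
    · rw [integral_const, probReal_univ, one_smul]
      refine (tendsto_const_nhds.sub hv).congr' ?_
      filter_upwards [eventually_ge_atTop 1] with n hn using (hmean n hn).symm
  have hSL1 := tendsto_integral_abs_average_sub_of_iIndepFun (hint 0 1) hindep hident
  refine squeeze_zero (fun n => integral_nonneg fun ω => abs_nonneg _) (fun n => ?_)
    (by simpa only [add_zero] using hSL1.add hgapL1)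
  have h1 : Integrable (fun ω => |S n ω - a₁|) μ := ((hS n).sub (integrable_const _)).abs
  have h2 : Integrable (fun ω => |(S n ω - X 0 n ω / n) - (a₁ - v)|) μ :=
    ((hgap n).sub (integrable_const _)).abs
  rw [← integral_add h1 h2]
  refine integral_mono (((hint 0 n).div_const _).sub (integrable_const _)).abs (h1.add h2)
    fun ω => ?_
  calc |X 0 n ω / n - v| = |(S n ω - a₁) - ((S n ω - X 0 n ω / n) - (a₁ - v))| := by ring_nf
    _ ≤ _ := abs_sub _ _

end Liggett

end

theorem liggett_subadditive_ergodic_general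
    {Ω : Type*} [MeasurableSpace Ω] (μ : Measure Ω) [IsProbabilityMeasure μ]
    (X : ℕ → ℕ → Ω → ℝ)
    (hint : ∀ m n, Integrable (X m n) μ)
    (hsub : ∀ m n : ℕ, m ≤ n → ∀ ω, X 0 n ω ≤ X 0 m ω + X m n ω)
    (hstat : ∀ n : ℕ, μ.map (fun ω => fun k : ℕ => X n (n + k) ω)
        = μ.map (fun ω => fun k : ℕ => X 0 k ω))
    (hindep : ∀ k : ℕ, 1 ≤ k →
        iIndepFun (fun (n : ℕ) ω => X (n * k) ((n + 1) * k) ω) μ)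
    (hident : ∀ k n : ℕ, 1 ≤ k →
        IdentDistrib (fun ω => X (n * k) ((n + 1) * k) ω) (fun ω => X 0 k ω) μ μ)
    (v : ℝ)
    (hv : IsGLB {x : ℝ | ∃ n : ℕ, 1 ≤ n ∧ x = (∫ ω, X 0 n ω ∂μ) / n} v) :
    (∀ᵐ ω ∂μ, Tendsto (fun n : ℕ => X 0 n ω / n) atTop (𝓝 v)) ∧
      Tendsto (fun n : ℕ => ∫ ω, |X 0 n ω / n - v| ∂μ) atTop (𝓝 0) := by
  have hmean : Tendsto (fun n : ℕ => (∫ ω, X 0 n ω ∂μ) / n) atTop (𝓝 v) := by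
    refine (Liggett.subadditive_integral hint hsub hstat).tendsto_of_isGLB ?_
    convert hv using 1
    ext x
    simp [eq_comm]
  have hae := Liggett.ae_tendsto_div hint hsub hstat hindep hident hmean
  refine ⟨hae, Liggett.tendsto_integral_abs_div_sub hint hsub ?_ ?_ hmean hae⟩
  · simpa using hindep 1 le_rfl
  · simpa using fun i => hident 1 i le_rfl

/-- Liggett's subadditive ergodic theorem, in the form used in the paper. -/
theorem liggett_subadditive_ergodic
    {Ω : Type*} [MeasurableSpace Ω] (μ : Measure Ω) [IsProbabilityMeasure μ]
    (X : ℕ → ℕ → Ω → ℝ)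
    (hmeas : ∀ m n, Measurable (X m n))
    (hint : ∀ m n, Integrable (X m n) μ)
    (hsub : ∀ m n : ℕ, m ≤ n → ∀ ω, X 0 n ω ≤ X 0 m ω + X m n ω)
    (hstat : ∀ n : ℕ, μ.map (fun ω => fun k : ℕ => X n (n + k) ω)
        = μ.map (fun ω => fun k : ℕ => X 0 k ω))
    (hindep : ∀ k : ℕ, 1 ≤ k →
        iIndepFun (fun (n : ℕ) ω => X (n * k) ((n + 1) * k) ω) μ)
    (hident : ∀ k n : ℕ, 1 ≤ k →
        IdentDistrib (fun ω => X (n * k) ((n + 1) * k) ω) (fun ω => X 0 k ω) μ μ)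
    (hbd : ∃ C : ℝ, ∀ n : ℕ, 1 ≤ n → (∫ ω, |X 0 n ω| ∂μ) / n ≤ C)
    (v : ℝ)
    (hv : IsGLB {x : ℝ | ∃ n : ℕ, 1 ≤ n ∧ x = (∫ ω, X 0 n ω ∂μ) / n} v) :
    (∀ᵐ ω ∂μ, Tendsto (fun n : ℕ => X 0 n ω / n) atTop (𝓝 v)) ∧
      Tendsto (fun n : ℕ => ∫ ω, |X 0 n ω / n - v| ∂μ) atTop (𝓝 0) :=
  liggett_subadditive_ergodic_general μ X hint hsub hstat hindep hident v hv
end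

section
/- Decomposition of the walk: if W_t = S⁰_{N⁰_t} + S¹_{N¹_t}, where S⁰ and S¹ are discrete-time random walks with mean increments v₀/γ and v₁/γ respectively and satisfy SLLNs S^i_n/n → v_i/γ a.s., and N⁰_t + N¹_t = N_t with N_t/t → γ a.s., then liminf_{t→∞} t^{-1} W_t = v₀ + (v₁−v₀)·liminf_{t→∞}(γt)^{-1} N¹_t and limsup_{t→∞} t^{-1} W_t = v₁ − (v₁−v₀)·liminf_{t→∞}(γt)^{-1} N⁰_t almost surely. -/
/-!
Fix a typical `ω` and put `a_i(t) = N^i_t / (γ t)`. Since `N^i_t ≤ N_t = O(t)`, the strong law for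
`S^i` gives `S^i_{N^i_t} = (v_i / γ) N^i_t + o(t)`, even where `N^i_t` stays bounded; hence
`W_t / t = v₀ a₀(t) + v₁ a₁(t) + o(1)` with `a₀ + a₁ → 1`. So `W_t / t` is, up to `o(1)`, both
`v₀ + (v₁ - v₀) a₁(t)` and `v₁ - (v₁ - v₀) a₀(t)`; the first map is monotone and the second
antitone in `a`, so they turn `liminf a₁` into `liminf W_t / t` and `liminf a₀` into `limsup W_t / t`.
-/

open MeasureTheory Filter Set Asymptotics
open scoped Topology

section LiminfOfTendstoSub

variable {ι α : Type*} [AddCommGroup α] [ConditionallyCompleteLinearOrder α] [DenselyOrdered α]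
  [AddLeftMono α] [TopologicalSpace α] [OrderTopology α] {l : Filter ι} [l.NeBot] {f g : ι → α}

theorem liminf_eq_of_tendsto_sub (hfg : Tendsto (f - g) l (𝓝 0))
    (hg : IsBoundedUnder (· ≥ ·) l g) (hg' : IsCoboundedUnder (· ≥ ·) l g) :
    liminf f l = liminf g l := by
  have hf : f = (f - g) + g := (sub_add_cancel f g).symm
  have upper := liminf_add_le hfg.isBoundedUnder_ge hfg.isBoundedUnder_le hg hg'
  have lower := le_liminf_add hfg.isBoundedUnder_ge hfg.isBoundedUnder_le hg hg'
  rw [hfg.limsup_eq, zero_add] at upper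
  rw [hfg.liminf_eq, zero_add] at lower
  rw [hf]
  exact le_antisymm upper lower

theorem limsup_eq_of_tendsto_sub (hfg : Tendsto (f - g) l (𝓝 0))
    (hg : IsBoundedUnder (· ≤ ·) l g) (hg' : IsCoboundedUnder (· ≤ ·) l g) :
    limsup f l = limsup g l :=
  liminf_eq_of_tendsto_sub (α := αᵒᵈ) hfg hg hg'

end LiminfOfTendstoSub

section Mixture

variable {ι : Type*} {l : Filter ι} {f a b : ι → ℝ} {v w : ℝ}

theorem isBoundedUnder_le_of_tendsto_add (hb : ∀ᶠ i in l, 0 ≤ b i)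
    (hab : Tendsto (a + b) l (𝓝 1)) : IsBoundedUnder (· ≤ ·) l a :=
  hab.isBoundedUnder_le.mono_le (hb.mono fun _ hbi => le_add_of_nonneg_right hbi)

theorem liminf_eq_add_mul_liminf [l.NeBot] (hvw : v ≤ w) (ha : ∀ᶠ i in l, 0 ≤ a i)
    (hb : ∀ᶠ i in l, 0 ≤ b i) (hab : Tendsto (a + b) l (𝓝 1))
    (hf : Tendsto (fun i => f i - (v * a i + w * b i)) l (𝓝 0)) :
    liminf f l = v + (w - v) * liminf b l := by
  have hφ : Monotone fun x : ℝ => v + (w - v) * x := fun _ _ hxy => by nlinarith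
  have hb_le : IsBoundedUnder (· ≤ ·) l b :=
    isBoundedUnder_le_of_tendsto_add ha ((add_comm a b) ▸ hab)
  have hb_ge : IsBoundedUnder (· ≥ ·) l b := isBoundedUnder_of_eventually_ge hb
  have hdiff : Tendsto (f - (fun i => v + (w - v) * b i)) l (𝓝 0) := by
    have := hf.add ((hab.sub_const 1).const_mul v)
    simp only [sub_self, mul_zero, add_zero] at this
    refine this.congr fun i => ?_
    simp only [Pi.sub_apply, Pi.add_apply]
    ring
  calc liminf f l = liminf ((fun x => v + (w - v) * x) ∘ b) l :=
        liminf_eq_of_tendsto_sub hdiff (hφ.isBoundedUnder_ge_comp hb_ge)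
          (hφ.isBoundedUnder_le_comp hb_le).isCoboundedUnder_ge
    _ = v + (w - v) * liminf b l :=
        (hφ.map_liminf_of_continuousAt b (by fun_prop) hb_le.isCoboundedUnder_ge hb_ge).symm

theorem limsup_eq_sub_mul_liminf [l.NeBot] (hvw : v ≤ w) (ha : ∀ᶠ i in l, 0 ≤ a i)
    (hb : ∀ᶠ i in l, 0 ≤ b i) (hab : Tendsto (a + b) l (𝓝 1))
    (hf : Tendsto (fun i => f i - (v * a i + w * b i)) l (𝓝 0)) :
    limsup f l = w - (w - v) * liminf a l := by
  have hφ : Antitone fun x : ℝ => w - (w - v) * x := fun _ _ hxy => by nlinarith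
  have ha_le : IsBoundedUnder (· ≤ ·) l a := isBoundedUnder_le_of_tendsto_add hb hab
  have ha_ge : IsBoundedUnder (· ≥ ·) l a := isBoundedUnder_of_eventually_ge ha
  have hdiff : Tendsto (f - (fun i => w - (w - v) * a i)) l (𝓝 0) := by
    have := hf.add ((hab.sub_const 1).const_mul w)
    simp only [sub_self, mul_zero, add_zero] at this
    refine this.congr fun i => ?_
    simp only [Pi.sub_apply, Pi.add_apply]
    ring
  calc limsup f l = limsup ((fun x => w - (w - v) * x) ∘ a) l :=
        limsup_eq_of_tendsto_sub hdiff (hφ.isBoundedUnder_le_comp ha_ge)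
          (hφ.isBoundedUnder_ge_comp ha_le).isCoboundedUnder_le
    _ = w - (w - v) * liminf a l :=
        (hφ.map_liminf_of_continuousAt a (by fun_prop) ha_le.isCoboundedUnder_ge ha_ge).symm

end Mixture

theorem Asymptotics.IsLittleO.comp_natCast_isBigO {α : Type*} {l : Filter α} {h : ℕ → ℝ}
    {m : α → ℕ} {g : α → ℝ} (hh : h =o[atTop] fun n : ℕ => (n : ℝ))
    (hm : (fun x => (m x : ℝ)) =O[l] g) (hg : Tendsto (fun x => ‖g x‖) l atTop) :
    (fun x => h (m x)) =o[l] g := by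
  -- `m x` need not tend to infinity, so the bound `‖h n‖ ≤ ε n + C` is needed for all `n`.
  refine IsLittleO.of_bound fun c hc => ?_
  obtain ⟨K, hK, hmK⟩ := hm.exists_pos
  set ε := c / (2 * K)
  have hε : 0 < ε := by positivity
  obtain ⟨C, hC⟩ : BddAbove (range fun n => ‖h n‖ - ε * n) :=
    IsBoundedUnder.bddAbove_range <| isBoundedUnder_of_eventually_le (a := 0) <|
      (hh.bound hε).mono fun n hn => by simpa using hn
  filter_upwards [hmK.bound, hg.eventually_ge_atTop (2 * C / c)] with x hmx hgx
  have hCx : ‖h (m x)‖ ≤ ε * m x + C := by linarith [hC (mem_range_self (m x))]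
  rw [Real.norm_natCast] at hmx
  have : 2 * C ≤ c * ‖g x‖ := by rwa [div_le_iff₀' hc] at hgx
  calc ‖h (m x)‖ ≤ ε * (K * ‖g x‖) + C := hCx.trans (by gcongr)
    _ = c / 2 * ‖g x‖ + C := by simp only [ε]; field_simp
    _ ≤ c * ‖g x‖ := by linarith

theorem isLittleO_sub_mul_of_tendsto_div {S : ℕ → ℝ} {c : ℝ}
    (hS : Tendsto (fun n : ℕ => S n / n) atTop (𝓝 c)) :
    (fun n : ℕ => S n - c * n) =o[atTop] fun n : ℕ => (n : ℝ) := by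
  have hzero : ∀ᶠ n : ℕ in atTop, (n : ℝ) = 0 → S n - c * n = 0 := by
    filter_upwards [eventually_ne_atTop 0] with n hn hn'
    exact absurd hn' (Nat.cast_ne_zero.2 hn)
  have hlim : Tendsto (fun n : ℕ => S n / n - c) atTop (𝓝 0) := by
    simpa using hS.sub_const c
  refine (isLittleO_iff_tendsto' hzero).2 (hlim.congr' ?_)
  filter_upwards [eventually_ne_atTop 0] with n hn
  field_simp

theorem speed_vs_density_general
    {Ω : Type*} [MeasurableSpace Ω] (μ : Measure Ω)
    (γ v0 v1 : ℝ) (hγ : 0 < γ) (hv : v0 < v1)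
    (S0 S1 : ℕ → Ω → ℝ) (N0 N1 N : ℝ → Ω → ℕ) (W : ℝ → Ω → ℝ)
    (hdec : ∀ t ω, W t ω = S0 (N0 t ω) ω + S1 (N1 t ω) ω)
    (hsum : ∀ t ω, N0 t ω + N1 t ω = N t ω)
    (hS0 : ∀ᵐ ω ∂μ, Tendsto (fun n : ℕ => S0 n ω / n) atTop (𝓝 (v0 / γ)))
    (hS1 : ∀ᵐ ω ∂μ, Tendsto (fun n : ℕ => S1 n ω / n) atTop (𝓝 (v1 / γ)))
    (hN : ∀ᵐ ω ∂μ, Tendsto (fun t : ℝ => (N t ω : ℝ) / t) atTop (𝓝 γ)) :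
    ∀ᵐ ω ∂μ,
      liminf (fun t : ℝ => W t ω / t) atTop
          = v0 + (v1 - v0) * liminf (fun t : ℝ => (N1 t ω : ℝ) / (γ * t)) atTop
        ∧
      limsup (fun t : ℝ => W t ω / t) atTop
          = v1 - (v1 - v0) * liminf (fun t : ℝ => (N0 t ω : ℝ) / (γ * t)) atTop := by
  filter_upwards [hS0, hS1, hN] with ω h0 h1 hNω
  have hsumω (t : ℝ) : (N0 t ω : ℝ) + N1 t ω = N t ω := mod_cast hsum t ω
  have hNO : (fun t => (N t ω : ℝ)) =O[atTop] id :=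
    isBigO_of_div_tendsto_nhds
      ((eventually_ne_atTop 0).mono fun t ht ht' => absurd ht' ht) γ hNω
  have hO (M : ℝ → Ω → ℕ) (hM : ∀ t, M t ω ≤ N t ω) : (fun t => (M t ω : ℝ)) =O[atTop] id :=
    (isBigO_of_le _ fun t => by simpa using hM t).trans hNO
  have he0 := (isLittleO_sub_mul_of_tendsto_div h0).comp_natCast_isBigO
    (hO N0 fun t => hsum t ω ▸ Nat.le_add_right _ _) tendsto_norm_atTop_atTop
  have he1 := (isLittleO_sub_mul_of_tendsto_div h1).comp_natCast_isBigO
    (hO N1 fun t => hsum t ω ▸ Nat.le_add_left _ _) tendsto_norm_atTop_atTop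
  have hnonneg (M : ℝ → Ω → ℕ) : ∀ᶠ t in atTop, 0 ≤ (M t ω : ℝ) / (γ * t) :=
    (eventually_ge_atTop 0).mono fun t ht => by positivity
  have hdensity : Tendsto ((fun t => (N0 t ω : ℝ) / (γ * t)) + fun t => (N1 t ω : ℝ) / (γ * t))
      atTop (𝓝 1) := by
    have hNγ : Tendsto (fun t => γ⁻¹ * ((N t ω : ℝ) / t)) atTop (𝓝 1) := by
      simpa [hγ.ne'] using hNω.const_mul γ⁻¹
    refine hNγ.congr fun t => ?_
    simp only [Pi.add_apply, ← add_div, hsumω]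
    field_simp
  have hW : Tendsto (fun t => W t ω / t - (v0 * ((N0 t ω : ℝ) / (γ * t))
      + v1 * ((N1 t ω : ℝ) / (γ * t)))) atTop (𝓝 0) := by
    refine (he0.add he1).tendsto_div_nhds_zero.congr' ?_
    filter_upwards [eventually_ne_atTop 0] with t ht
    simp only [hdec, id]
    field_simp
    ring
  exact ⟨liminf_eq_add_mul_liminf hv.le (hnonneg N0) (hnonneg N1) hdensity hW,
    limsup_eq_sub_mul_liminf hv.le (hnonneg N0) (hnonneg N1) hdensity hW⟩

/-- Lemma 5.2 of the paper (speed vs. density of 1's seen by the walk):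
if `W_t = S⁰_{N⁰_t} + S¹_{N¹_t}` with `S^i_n/n → v_i/γ` a.s.,
`N⁰_t + N¹_t = N_t` and `N_t/t → γ` a.s., then a.s.
`liminf t⁻¹W_t = v₀ + (v₁−v₀)·liminf (γt)⁻¹N¹_t` and
`limsup t⁻¹W_t = v₁ − (v₁−v₀)·liminf (γt)⁻¹N⁰_t`. -/
theorem speed_vs_density
    {Ω : Type*} [MeasurableSpace Ω] (μ : Measure Ω) [IsProbabilityMeasure μ]
    (γ v0 v1 : ℝ) (hγ : 0 < γ) (hv : v0 < v1)
    (S0 S1 : ℕ → Ω → ℝ) (N0 N1 N : ℝ → Ω → ℕ) (W : ℝ → Ω → ℝ)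
    (hdec : ∀ t ω, W t ω = S0 (N0 t ω) ω + S1 (N1 t ω) ω)
    (hsum : ∀ t ω, N0 t ω + N1 t ω = N t ω)
    (hS0 : ∀ᵐ ω ∂μ, Tendsto (fun n : ℕ => S0 n ω / n) atTop (𝓝 (v0 / γ)))
    (hS1 : ∀ᵐ ω ∂μ, Tendsto (fun n : ℕ => S1 n ω / n) atTop (𝓝 (v1 / γ)))
    (hN : ∀ᵐ ω ∂μ, Tendsto (fun t : ℝ => (N t ω : ℝ) / t) atTop (𝓝 γ)) :
    ∀ᵐ ω ∂μ,
      liminf (fun t : ℝ => W t ω / t) atTop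
          = v0 + (v1 - v0) * liminf (fun t : ℝ => (N1 t ω : ℝ) / (γ * t)) atTop
        ∧
      limsup (fun t : ℝ => W t ω / t) atTop
          = v1 - (v1 - v0) * liminf (fun t : ℝ => (N0 t ω : ℝ) / (γ * t)) atTop :=
  speed_vs_density_general μ γ v0 v1 hγ hv S0 S1 N0 N1 N W hdec hsum hS0 hS1 hN
end

section
/- Let (z_n)_{n∈ℤ\{0}} be an increasing doubly-infinite sequence of integers with z_n/n → 1/ρ as n → ±∞ for some ρ > 0, and let ι > 0. Define the 'safe region' S as the union over n of the upward cones {(y,t) : t ≥ 2/ι, |y − z_n| ≤ (ι/2)t − 1}. Then for every m > 0, the cone V_m = {(x,s) ∈ ℤ×[0,∞) : |x| ≤ ms} intersects the complement of S in a bounded set. -/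
/-!
Since `z n = n / ρ + o(|n|)` as `n → ±∞`, the integer `x` lies within `o(|x|)` of the point
`z ⌊ρ x⌋`. On the cone `V_m` we have `|x| ≤ m t`, so for `t` large this distance is below
`(ι / 2) t - 1`, i.e. `(x, t)` lies in the safe region.
-/

open Filter Set
open scoped Topology

theorem exists_abs_sub_mul_le_of_tendsto_div {u : ℤ → ℝ} {a : ℝ}
    (htop : Tendsto (fun n : ℤ => u n / n) atTop (𝓝 a))
    (hbot : Tendsto (fun n : ℤ => u n / n) atBot (𝓝 a)) {ε : ℝ} (hε : 0 < ε) :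
    ∃ C, ∀ n : ℤ, |u n - a * n| ≤ ε * |(n : ℝ)| + C := by
  have hlim : Tendsto (fun n : ℤ => u n / n) cofinite (𝓝 a) := by
    rw [Int.cofinite_eq]; exact hbot.sup htop
  have hfin : {n : ℤ | ¬ |u n - a * n| ≤ ε * |(n : ℝ)|}.Finite := by
    refine eventually_cofinite.1 ?_
    filter_upwards [hlim.eventually (Metric.closedBall_mem_nhds a hε),
      eventually_cofinite_ne 0] with n hn hn0
    have hn0' : (n : ℝ) ≠ 0 := Int.cast_ne_zero.2 hn0
    rw [Real.dist_eq] at hn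
    calc |u n - a * n| = |u n / n - a| * |(n : ℝ)| := by
          rw [← abs_mul, sub_mul, div_mul_cancel₀ _ hn0']
      _ ≤ ε * |(n : ℝ)| := by gcongr
  obtain ⟨C, hC⟩ := (hfin.image fun n => |u n - a * n|).bddAbove
  refine ⟨max C 0, fun n => ?_⟩
  by_cases hn : |u n - a * n| ≤ ε * |(n : ℝ)|
  · linarith [le_max_right C 0]
  · have := hC (mem_image_of_mem _ hn)
    nlinarith [le_max_left C 0, abs_nonneg (n : ℝ)]

theorem exists_abs_sub_apply_le_of_tendsto_div {u : ℤ → ℝ} {a : ℝ} (ha : 0 < a)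
    (htop : Tendsto (fun n : ℤ => u n / n) atTop (𝓝 a))
    (hbot : Tendsto (fun n : ℤ => u n / n) atBot (𝓝 a)) {ε : ℝ} (hε : 0 < ε) :
    ∃ C, ∀ y : ℝ, ∃ n : ℤ, |y - u n| ≤ ε * |y| + C := by
  obtain ⟨C, hC⟩ := exists_abs_sub_mul_le_of_tendsto_div htop hbot (mul_pos hε ha)
  refine ⟨a + ε * a + C, fun y => ⟨⌊y / a⌋, ?_⟩⟩
  set n := ⌊y / a⌋
  have hn : |y / a - n| ≤ 1 := by
    rw [abs_of_nonneg (sub_nonneg.2 (Int.floor_le _))]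
    linarith [Int.lt_floor_add_one (y / a)]
  have hna : |y - a * n| ≤ a := by
    calc |y - a * n| = a * |y / a - n| := by
          rw [← abs_of_pos ha, ← abs_mul, abs_of_pos ha, mul_sub, mul_div_cancel₀ _ ha.ne']
      _ ≤ a := by nlinarith
  have hnabs : a * |(n : ℝ)| ≤ |y| + a := by
    have := abs_sub_abs_le_abs_sub (a * n) y
    rw [abs_mul, abs_of_pos ha, abs_sub_comm] at this
    linarith
  calc |y - u n| ≤ |y - a * n| + |u n - a * n| := by
          rw [abs_sub_comm (u n)]; exact abs_sub_le _ _ _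
    _ ≤ a + (ε * a * |(n : ℝ)| + C) := add_le_add hna (hC n)
    _ ≤ ε * |y| + (a + ε * a + C) := by nlinarith

theorem safe_region_covers_cone_general
    (ρ ι m : ℝ) (hρ : 0 < ρ) (hι : 0 < ι)
    (z : ℤ → ℤ)
    (htop : Tendsto (fun n : ℤ => (z n : ℝ) / (n : ℝ)) atTop (𝓝 (1 / ρ)))
    (hbot : Tendsto (fun n : ℤ => (z n : ℝ) / (n : ℝ)) atBot (𝓝 (1 / ρ)))
    (S : Set (ℤ × ℝ))
    (hS : S = {p : ℤ × ℝ | ∃ n : ℤ,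
        2 / ι ≤ p.2 ∧ |(p.1 : ℝ) - (z n : ℝ)| ≤ (ι / 2) * p.2 - 1})
    (V : Set (ℤ × ℝ))
    (hV : V = {p : ℤ × ℝ | 0 ≤ p.2 ∧ |(p.1 : ℝ)| ≤ m * p.2}) :
    ∃ R : ℝ, ∀ p ∈ V ∩ Sᶜ, |(p.1 : ℝ)| ≤ R ∧ p.2 ≤ R := by
  subst hS hV
  set ε := ι / (4 * (|m| + 1))
  have hεm : ε * |m| ≤ ι / 4 := by
    rw [div_mul_eq_mul_div, div_le_div_iff₀ (by positivity) (by norm_num)]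
    nlinarith [abs_nonneg m]
  obtain ⟨C, hC⟩ := exists_abs_sub_apply_le_of_tendsto_div (one_div_pos.2 hρ) htop hbot
    (show 0 < ε by positivity)
  set T := max (2 / ι) (4 * (C + 1) / ι)
  refine ⟨max (|m| * T) T, ?_⟩
  rintro ⟨x, t⟩ ⟨⟨ht0, hxt⟩, hxS⟩
  have hxt' : |(x : ℝ)| ≤ |m| * t := hxt.trans (by gcongr; exact le_abs_self m)
  have htT : t < T := by
    by_contra! hTt
    obtain ⟨n, hn⟩ := hC x
    refine hxS ⟨n, (le_max_left _ _).trans hTt, ?_⟩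
    have hC1 : C + 1 ≤ ι / 4 * t := by
      have := (le_max_right _ _).trans hTt
      rw [div_le_iff₀ hι] at this
      linarith
    calc |(x : ℝ) - z n| ≤ ε * |(x : ℝ)| + C := hn
      _ ≤ ε * |m| * t + C := by rw [mul_assoc]; gcongr
      _ ≤ ι / 2 * t - 1 := by nlinarith
  exact ⟨hxt'.trans ((by gcongr : |m| * t ≤ |m| * T).trans (le_max_left _ _)),
    htT.le.trans (le_max_right _ _)⟩

/-- Deterministic geometry underlying Proposition 3.4: if `z_n/n → 1/ρ` as
`n → ±∞` and `S` is the union of the upward cones of inclination `ι/2` with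
tips above the points `z_n`, then every cone `V_m` of inclination `m`
intersects the complement of `S` in a bounded set. -/
theorem safe_region_covers_cone
    (ρ ι m : ℝ) (hρ : 0 < ρ) (hι : 0 < ι) (hm : 0 < m)
    (z : ℤ → ℤ) (hmono : StrictMono z)
    (htop : Tendsto (fun n : ℤ => (z n : ℝ) / (n : ℝ)) atTop (𝓝 (1 / ρ)))
    (hbot : Tendsto (fun n : ℤ => (z n : ℝ) / (n : ℝ)) atBot (𝓝 (1 / ρ)))
    (S : Set (ℤ × ℝ))
    (hS : S = {p : ℤ × ℝ | ∃ n : ℤ,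
        2 / ι ≤ p.2 ∧ |(p.1 : ℝ) - (z n : ℝ)| ≤ (ι / 2) * p.2 - 1})
    (V : Set (ℤ × ℝ))
    (hV : V = {p : ℤ × ℝ | 0 ≤ p.2 ∧ |(p.1 : ℝ)| ≤ m * p.2}) :
    ∃ R : ℝ, ∀ p ∈ V ∩ Sᶜ, |(p.1 : ℝ)| ≤ R ∧ p.2 ≤ R :=
  safe_region_covers_cone_general ρ ι m hρ hι z htop hbot S hS V hV
end
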